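/- For N items with PL scores w, the sum over all permutations (i_1,...,i_N) consistent with a partitioned preference S_1 ≻ ⋯ ≻ S_M of ∏_{l=1}^N exp(w_{i_l}) / Σ_{r=l}^N exp(w_{i_r}) equals ∏_{m=1}^{M-1} [ Σ_{(j_1,...,j_{n_m}) ∈ σ(S_m)} ∏_{l=1}^{n_m} exp(w_{j_l}) / ( Σ_{k∈R_m} exp(w_k) − Σ_{r=1}^{l-1} exp(w_{j_r}) ) ], where σ(S_m) is the set of permutations of S_m, n_m = |S_m|, and R_m = ∪_{r=m}^M S_r. -/

import Mathlib

open scoped Classical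

/-- Plackett-Luce probability of an ordered list of items under scores `w`. -/
noncomputable def PLlist {N : ℕ} (w : Fin N → ℝ) : List (Fin N) → ℝ
  | [] => 1
  | i :: t =>
      (Real.exp (w i) / (((i :: t).map fun j => Real.exp (w j)).sum)) * PLlist w t

/-- A full ranking (list) is consistent with the partitioned preference
`S 0 ≻ S 1 ≻ ⋯`. -/
def consistent {N M : ℕ} (S : Fin M → Finset (Fin N)) (l : List (Fin N)) : Prop :=
  ∀ m m' : Fin M, m < m' → ∀ i ∈ S m, ∀ j ∈ S m', l.idxOf i < l.idxOf j

/-- `innerProd w D (j₁,…,j_n) = ∏_{l=1}^{n} exp(w j_l) / (D − ∑_{r<l} exp (w j_r))`. -/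
noncomputable def innerProd {N : ℕ} (w : Fin N → ℝ) : ℝ → List (Fin N) → ℝ
  | _, [] => 1
  | D, i :: t => (Real.exp (w i) / D) * innerProd w (D - Real.exp (w i)) t

/-!
A ranking consistent with `S 0 ≻ S 1 ≻ ⋯` is exactly a concatenation of orderings of the
blocks, so these rankings correspond bijectively to tuples of block orderings. The
Plackett–Luce probability of a concatenation factorizes over the blocks: while the items of
block `m` are placed, the denominators start from the mass of the items not yet ranked, which
are those of `R_m = ⋃_{r ≥ m} S r`. Summing over the tuples therefore gives the product of the
block sums, and the factor of the last block is the total Plackett–Luce probability of all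
orderings of that block, which is `1`.
-/

open Finset Function

namespace List

variable {α : Type*}

theorem eq_filter_append_filter_not_of_pairwise (P : α → Bool) :
    ∀ {l : List α}, l.Pairwise (fun x y => P y → P x) →
      l = l.filter P ++ l.filter (fun x => !P x)
  | [], _ => rfl
  | x :: t, h => by
    rw [pairwise_cons] at h
    by_cases hx : P x
    · simp [hx, ← eq_filter_append_filter_not_of_pairwise P h.2]
    · have hall : ∀ y ∈ x :: t, ¬P y := by
        rintro y (_ | ⟨_, hy⟩)
        exacts [hx, mt (h.1 y hy) hx]
      rw [filter_eq_nil_iff.2 hall, filter_eq_self.2 (by simpa using hall), nil_append]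

theorem flatten_ofFn_eq_of_eq_nil {n : ℕ} (f : Fin n → List α) (m : Fin n)
    (hf : ∀ m' ≠ m, f m' = []) : (ofFn f).flatten = f m := by
  refine ((sublist_flatten_of_mem (mem_ofFn.2 ⟨m, rfl⟩)).eq_of_length ?_).symm
  rw [length_flatten, map_ofFn, sum_ofFn, Finset.sum_eq_single m (fun m' _ h => by simp [hf m' h])
    (by simp)]
  rfl

end List

section Orderings

variable {α : Type*} [DecidableEq α]

noncomputable def orderings (s : Finset α) : Finset (List α) :=
  s.toList.permutations.toFinset

theorem mem_orderings {s : Finset α} {l : List α} :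
    l ∈ orderings s ↔ l.Nodup ∧ l.toFinset = s := by
  rw [orderings, List.mem_toFinset, List.mem_permutations]
  refine ⟨fun h => ⟨h.nodup_iff.2 s.nodup_toList, by rw [List.toFinset_eq_of_perm _ _ h,
    toList_toFinset]⟩, fun ⟨hl, hs⟩ => ?_⟩
  exact List.perm_of_nodup_nodup_toFinset_eq hl s.nodup_toList (by rw [hs, toList_toFinset])

theorem sum_orderings {β : Type*} [AddCommMonoid β] (s : Finset α) (f : List α → β) :
    ∑ l ∈ orderings s, f l = (s.toList.permutations.map f).sum :=
  List.sum_toFinset f (List.nodup_permutations _ s.nodup_toList)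

theorem cons_mem_orderings {s : Finset α} {a : α} {l : List α} :
    a :: l ∈ orderings s ↔ a ∈ s ∧ l ∈ orderings (s.erase a) := by
  simp only [mem_orderings, List.nodup_cons, List.toFinset_cons]
  constructor
  · rintro ⟨⟨ha, hl⟩, rfl⟩
    simp [ha, hl, erase_insert (List.mem_toFinset.not.2 ha)]
  · rintro ⟨ha, hl, hs⟩
    refine ⟨⟨fun h => ?_, hl⟩, by rw [hs, insert_erase ha]⟩
    simpa using (hs ▸ List.mem_toFinset.2 h : a ∈ s.erase a)

theorem orderings_eq_biUnion {s : Finset α} (hs : s.Nonempty) :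
    orderings s =
      s.biUnion fun a => (orderings (s.erase a)).map ⟨(a :: ·), List.cons_injective⟩ := by
  ext l
  cases l with
  | nil => simp [mem_orderings, hs.ne_empty.symm]
  | cons a l => simp [cons_mem_orderings]

theorem sum_orderings_eq_sum_sum_cons {β : Type*} [AddCommMonoid β] {s : Finset α}
    (hs : s.Nonempty) (f : List α → β) :
    ∑ l ∈ orderings s, f l = ∑ a ∈ s, ∑ l ∈ orderings (s.erase a), f (a :: l) := by
  rw [orderings_eq_biUnion hs, sum_biUnion]
  · simp [sum_map]
  · intro a _ b _ hab
    simp only [onFun, disjoint_left, mem_map, Embedding.coeFn_mk]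
    rintro _ ⟨l, _, rfl⟩ ⟨l', _, h⟩
    exact hab (List.cons_eq_cons.1 h).1.symm

end Orderings

section PlackettLuce

variable {N : ℕ} (w : Fin N → ℝ)

theorem innerProd_append (l₁ l₂ : List (Fin N)) (D : ℝ) :
    innerProd w D (l₁ ++ l₂) =
      innerProd w D l₁ * innerProd w (D - (l₁.map fun i => Real.exp (w i)).sum) l₂ := by
  induction l₁ generalizing D with
  | nil => simp [innerProd]
  | cons i t ih =>
    simp only [List.cons_append, innerProd, ih, List.map_cons, List.sum_cons, sub_sub, mul_assoc]

theorem PLlist_eq_innerProd (l : List (Fin N)) :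
    PLlist w l = innerProd w (l.map fun i => Real.exp (w i)).sum l := by
  induction l with
  | nil => rfl
  | cons i t ih => simp [PLlist, innerProd, ih]

theorem PLlist_append (l₁ l₂ : List (Fin N)) :
    PLlist w (l₁ ++ l₂) =
      innerProd w ((l₁ ++ l₂).map fun i => Real.exp (w i)).sum l₁ * PLlist w l₂ := by
  rw [PLlist_eq_innerProd, innerProd_append, PLlist_eq_innerProd]
  simp

theorem PLlist_flatten_ofFn {M : ℕ} (p : Fin M → List (Fin N)) :
    PLlist w (List.ofFn p).flatten =
      ∏ m, innerProd w (∑ m' ≥ m, ((p m').map fun i => Real.exp (w i)).sum) (p m) := by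
  induction M with
  | zero => rfl
  | succ M ih =>
    rw [List.ofFn_succ, List.flatten_cons, PLlist_append, ih, Fin.prod_univ_succ]
    simp [Fin.sum_Ici_succ, Fin.sum_univ_succ, List.sum_flatten, List.map_ofFn, List.sum_ofFn]

theorem sum_orderings_innerProd (s : Finset (Fin N)) :
    ∑ l ∈ orderings s, innerProd w (∑ i ∈ s, Real.exp (w i)) l = 1 := by
  induction s using Finset.strongInduction with
  | H s ih =>
  rcases s.eq_empty_or_nonempty with rfl | hs
  · simp [orderings, innerProd]
  rw [sum_orderings_eq_sum_sum_cons hs]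
  set D := ∑ i ∈ s, Real.exp (w i)
  calc ∑ i ∈ s, ∑ l ∈ orderings (s.erase i), innerProd w D (i :: l)
      = ∑ i ∈ s, Real.exp (w i) / D := sum_congr rfl fun i hi => by
        simp only [D, innerProd, ← mul_sum, ← sum_erase_eq_sub hi, ih _ (erase_ssubset hi),
          mul_one]
    _ = 1 := by
      rw [← sum_div, div_self (sum_pos (fun i _ => Real.exp_pos (w i)) hs).ne']

end PlackettLuce

theorem eq_of_mem_of_mem_of_pairwise_disjoint {α ι : Type*} {S : ι → Finset α}
    (hS : Pairwise (Disjoint on S)) {x : α} {a b : ι} (ha : x ∈ S a) (hb : x ∈ S b) : a = b :=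
  hS.eq (not_disjoint_iff.2 ⟨x, ha, hb⟩)

section Blocks

variable {α : Type*}

def BlockLE {M : ℕ} (S : Fin M → Finset α) (x y : α) : Prop :=
  ∀ m m', x ∈ S m → y ∈ S m' → m ≤ m'

variable {M : ℕ} {S : Fin M → Finset α}

theorem pairwise_blockLE_flatten_ofFn (hS : Pairwise (Disjoint on S)) {p : Fin M → List α}
    (hp : ∀ m, ∀ x ∈ p m, x ∈ S m) : (List.ofFn p).flatten.Pairwise (BlockLE S) := by
  have hblock {m m' x} (hx : x ∈ p m) (hx' : x ∈ S m') : m' = m :=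
    eq_of_mem_of_mem_of_pairwise_disjoint hS hx' (hp m x hx)
  rw [List.pairwise_flatten, List.pairwise_ofFn]
  refine ⟨?_, fun a b hab x hx y hy m m' hxm hym => ?_⟩
  · simp only [List.mem_ofFn, forall_exists_index, forall_apply_eq_imp_iff]
    exact fun a => List.pairwise_of_forall_mem_list fun x hx y hy m m' hxm hym => by
      rw [hblock hx hxm, hblock hy hym]
  · rw [hblock hx hxm, hblock hy hym]
    exact hab.le

variable [DecidableEq α]

theorem filter_flatten_ofFn (hS : Pairwise (Disjoint on S)) {p : Fin M → List α}
    (hp : ∀ m, ∀ x ∈ p m, x ∈ S m) (m : Fin M) :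
    (List.ofFn p).flatten.filter (· ∈ S m) = p m := by
  rw [List.filter_flatten, List.map_ofFn, List.flatten_ofFn_eq_of_eq_nil _ m]
  · exact List.filter_eq_self.2 fun x hx => by simpa using hp m x hx
  · refine fun m' hm' => List.filter_eq_nil_iff.2 fun x hx hxm => hm' ?_
    exact eq_of_mem_of_mem_of_pairwise_disjoint hS (hp m' x hx) (by simpa using hxm)

theorem eq_flatten_ofFn_filter_of_pairwise_blockLE :
    ∀ {M : ℕ} {S : Fin M → Finset α}, Pairwise (Disjoint on S) → ∀ {l : List α},
      (∀ x ∈ l, ∃ m, x ∈ S m) → l.Pairwise (BlockLE S) →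
        l = (List.ofFn fun m => l.filter (· ∈ S m)).flatten
  | 0, _, _, l, hcov, _ =>
    by simpa using List.eq_nil_iff_forall_not_mem.2 fun x hx => (hcov x hx).elim fun m _ => m.elim0
  | M + 1, S, hS, l, hcov, hl => by
    have hsplit : l = l.filter (· ∈ S 0) ++ l.filter (fun x => !decide (x ∈ S 0)) := by
      refine List.eq_filter_append_filter_not_of_pairwise _ (hl.imp_of_mem fun hx _ h hy0 => ?_)
      obtain ⟨m, hxm⟩ := hcov _ hx
      simpa [← Fin.le_zero_iff.1 (h m 0 hxm (by simpa using hy0))] using hxm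
    set rest := l.filter (fun x => !decide (x ∈ S 0))
    have hrest : rest = (List.ofFn fun m : Fin M => rest.filter (· ∈ S m.succ)).flatten := by
      refine eq_flatten_ofFn_filter_of_pairwise_blockLE
        (hS.comp_of_injective (Fin.succ_injective _)) (fun x hx => ?_)
        ((hl.filter _).imp fun h m m' hm hm' => Fin.succ_le_succ_iff.1 (h _ _ hm hm'))
      obtain ⟨hxl, hx0⟩ := List.mem_filter.1 hx
      obtain ⟨m, hxm⟩ := hcov x hxl
      have hm0 : m ≠ 0 := by
        rintro rfl
        simp [hxm] at hx0
      obtain ⟨k, rfl⟩ := Fin.eq_succ_of_ne_zero hm0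
      exact ⟨k, hxm⟩
    have hfilter (k : Fin M) : rest.filter (· ∈ S k.succ) = l.filter (· ∈ S k.succ) := by
      refine (List.filter_filter ..).trans (List.filter_congr fun x _ => ?_)
      by_cases hx : x ∈ S k.succ
      · have : x ∉ S 0 := fun h0 => Fin.succ_ne_zero k
          (eq_of_mem_of_mem_of_pairwise_disjoint hS hx h0)
        simp [hx, this]
      · simp [hx]
    rw [List.ofFn_succ, List.flatten_cons, ← funext hfilter, ← hrest]
    exact hsplit

theorem sum_filter_pairwise_blockLE_orderings_biUnion {β : Type*} [AddCommMonoid β]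
    (hS : Pairwise (Disjoint on S)) (f : List α → β) :
    ∑ l ∈ (orderings (univ.biUnion S)).filter (·.Pairwise (BlockLE S)), f l =
      ∑ p ∈ Fintype.piFinset fun m => orderings (S m), f (List.ofFn p).flatten := by
  have hmem {p : Fin M → List α} (hp : p ∈ Fintype.piFinset fun m => orderings (S m)) (m x) :
      x ∈ p m ↔ x ∈ S m := by
    rw [← (mem_orderings.1 (Fintype.mem_piFinset.1 hp m)).2, List.mem_toFinset]
  symm
  refine sum_nbij' (fun p => (List.ofFn p).flatten) (fun l m => l.filter (· ∈ S m))
    (fun p hp => ?_) (fun l hl => ?_) (fun p hp => ?_) (fun l hl => ?_) fun _ _ => rfl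
  · have hnodup : (List.ofFn p).flatten.Nodup := by
      refine List.nodup_flatten.2 ⟨?_, List.pairwise_ofFn.2 fun a b hab => ?_⟩
      · simpa [List.mem_ofFn] using fun m => (mem_orderings.1 (Fintype.mem_piFinset.1 hp m)).1
      · exact List.disjoint_left.2 fun x hxa hxb => hab.ne <|
          eq_of_mem_of_mem_of_pairwise_disjoint hS ((hmem hp a x).1 hxa) ((hmem hp b x).1 hxb)
    refine mem_filter.2 ⟨mem_orderings.2 ⟨hnodup, ?_⟩,
      pairwise_blockLE_flatten_ofFn hS fun m x => (hmem hp m x).1⟩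
    ext x
    simp [List.mem_flatten, hmem hp]
  · obtain ⟨hl, hsorted⟩ := mem_filter.1 hl
    obtain ⟨hnodup, hset⟩ := mem_orderings.1 hl
    refine Fintype.mem_piFinset.2 fun m => mem_orderings.2 ⟨hnodup.filter _, ?_⟩
    ext x
    simp only [List.toFinset_filter, mem_filter, List.mem_toFinset, decide_eq_true_eq,
      and_iff_right_iff_imp]
    exact fun hx => List.mem_toFinset.1 (hset ▸ mem_biUnion.2 ⟨m, mem_univ _, hx⟩)
  · funext m
    exact filter_flatten_ofFn hS (fun m x => (hmem hp m x).1) m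
  · obtain ⟨hl, hsorted⟩ := mem_filter.1 hl
    have hcov (x) (hx : x ∈ l) : ∃ m, x ∈ S m := by
      have hx' : x ∈ univ.biUnion S := (mem_orderings.1 hl).2 ▸ List.mem_toFinset.2 hx
      simpa using hx'
    exact (eq_flatten_ofFn_filter_of_pairwise_blockLE hS hcov hsorted).symm

end Blocks

section PartitionedPreference

variable {N M : ℕ} {S : Fin M → Finset (Fin N)}

theorem consistent_iff_pairwise_blockLE (hS : Pairwise (Disjoint on S)) {l : List (Fin N)}
    (hl : l.Nodup) (hmem : ∀ m, ∀ x ∈ S m, x ∈ l) :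
    consistent S l ↔ l.Pairwise (BlockLE S) := by
  rw [List.pairwise_iff_getElem]
  constructor
  · intro h i j hi hj hij m m' hm hm'
    by_contra! hlt
    have := h m' m hlt _ hm' _ hm
    rw [hl.idxOf_getElem, hl.idxOf_getElem] at this
    omega
  · intro h m m' hlt x hx y hy
    have hx' := List.idxOf_lt_length_iff.2 (hmem m x hx)
    have hy' := List.idxOf_lt_length_iff.2 (hmem m' y hy)
    by_contra! hle
    rcases hle.lt_or_eq with hlt' | heq
    · refine (h _ _ hy' hx' hlt' m' m ?_ ?_).not_gt hlt <;> rwa [List.getElem_idxOf]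
    · have hxy : y = x := (List.idxOf_inj (hmem m' y hy)).1 heq
      exact hlt.ne (eq_of_mem_of_mem_of_pairwise_disjoint hS hx (hxy ▸ hy))

theorem sum_consistent_eq_sum_piFinset {β : Type*} [AddCommMonoid β]
    (hS : Pairwise (Disjoint on S)) (hcover : univ.biUnion S = univ) (f : List (Fin N) → β) :
    ((List.finRange N).permutations.map fun l => if consistent S l then f l else 0).sum =
      ∑ p ∈ Fintype.piFinset fun m => orderings (S m), f (List.ofFn p).flatten := by
  have hperm : (univ : Finset (Fin N)).toList.Perm (List.finRange N) := by
    simpa using List.toFinset_toList (List.nodup_finRange N)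
  rw [← (hperm.permutations.map _).sum_eq, ← sum_orderings, ← sum_filter,
    ← sum_filter_pairwise_blockLE_orderings_biUnion hS, hcover]
  refine sum_congr (filter_congr fun l hl => ?_) fun _ _ => rfl
  obtain ⟨hnodup, hset⟩ := mem_orderings.1 hl
  exact consistent_iff_pairwise_blockLE hS hnodup fun m x _ => by
    simp [← List.mem_toFinset, hset]

theorem PLlist_flatten_ofFn_of_mem_piFinset (w : Fin N → ℝ) (hS : Pairwise (Disjoint on S))
    {p : Fin M → List (Fin N)} (hp : p ∈ Fintype.piFinset fun m => orderings (S m)) :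
    PLlist w (List.ofFn p).flatten =
      ∏ m, innerProd w (∑ k ∈ (Ici m).biUnion S, Real.exp (w k)) (p m) := by
  rw [PLlist_flatten_ofFn]
  refine prod_congr rfl fun m _ => congrArg (innerProd w · (p m)) ?_
  rw [sum_biUnion (hS.set_pairwise _)]
  refine sum_congr rfl fun m' _ => ?_
  obtain ⟨hnodup, hset⟩ := mem_orderings.1 (Fintype.mem_piFinset.1 hp m')
  rw [← hset, List.sum_toFinset _ hnodup]

end PartitionedPreference

theorem partitioned_preference_prob_eq_prod_explicit_general
    {N M : ℕ} (w : Fin N → ℝ) (S : Fin M → Finset (Fin N))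
    (hdisj : ∀ m m' : Fin M, m ≠ m' → Disjoint (S m) (S m'))
    (hcover : Finset.univ.biUnion S = (Finset.univ : Finset (Fin N))) :
    ((List.finRange N).permutations.map fun l =>
        if consistent S l then PLlist w l else 0).sum =
      ∏ m ∈ Finset.univ.filter (fun m : Fin M => (m : ℕ) < M - 1),
        ((S m).toList.permutations.map fun lj =>
            innerProd w
              (∑ k ∈ (Finset.univ.filter fun r : Fin M => m ≤ r).biUnion S,
                Real.exp (w k)) lj).sum := by
  have hIci_last (m : Fin M) (hm : ¬(m : ℕ) < M - 1) : Ici m = {m} := by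
    ext r
    simp only [mem_Ici, mem_singleton, Fin.le_def, Fin.ext_iff]
    omega
  simp_rw [filter_le_eq_Ici]
  rw [sum_consistent_eq_sum_piFinset hdisj hcover,
    sum_congr rfl fun p hp => PLlist_flatten_ofFn_of_mem_piFinset w hdisj hp, ← prod_univ_sum,
    ← prod_subset (filter_subset (fun m : Fin M => (m : ℕ) < M - 1) univ) fun m _ hm => ?_]
  · exact prod_congr rfl fun m _ => sum_orderings _ _
  · rw [hIci_last m (by simpa using hm), singleton_biUnion, sum_orderings_innerProd]

/-- The sum over all permutations consistent with the partitioned preference of the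
PL probability equals
`∏_{m=1}^{M-1} [ Σ_{(j_1,…,j_{n_m}) ∈ σ(S_m)} ∏_l exp(w j_l) / (Σ_{k ∈ R_m} exp (w k) − Σ_{r<l} exp (w j_r)) ]`
with `R_m = ∪_{r ≥ m} S_r`. -/
theorem partitioned_preference_prob_eq_prod_explicit
    {N M : ℕ} (hM : 1 ≤ M) (w : Fin N → ℝ) (S : Fin M → Finset (Fin N))
    (hdisj : ∀ m m' : Fin M, m ≠ m' → Disjoint (S m) (S m'))
    (hcover : Finset.univ.biUnion S = (Finset.univ : Finset (Fin N)))
    (hne : ∀ m : Fin M, (S m).Nonempty) :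
    ((List.finRange N).permutations.map fun l =>
        if consistent S l then PLlist w l else 0).sum =
      ∏ m ∈ Finset.univ.filter (fun m : Fin M => (m : ℕ) < M - 1),
        ((S m).toList.permutations.map fun lj =>
            innerProd w
              (∑ k ∈ (Finset.univ.filter fun r : Fin M => m ≤ r).biUnion S,
                Real.exp (w k)) lj).sum :=
  partitioned_preference_prob_eq_prod_explicit_general w S hdisj hcover
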